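/- arXiv:2407.15712 — 2 statements merged into one kernel-verified Lean document; each statement's English description precedes it below -/
import Mathlib

section
/- There exist two-qubit density matrices Υ^M, Υ^N (Choi states of channels) and a completely positive linear map Ξ̃ preserving the trace of all Choi states such that S(Ξ̃(Υ^M) ‖ Ξ̃(Υ^N)) = 1 > 1/2 = S(Υ^M ‖ Υ^N). Concretely, take Υ^M = (1/4)(|00⟩⟨00| + |01⟩⟨01| + 2|11⟩⟨11|), Υ^N = 𝕀/4, and Ξ̃(Q) = (𝕀/2) ⊗ 2⟨1|_A Q|1⟩_A; then Ξ̃(Υ^M) = (𝕀/2) ⊗ |1⟩⟨1|, Ξ̃(Υ^N) = 𝕀/4, and the stated relative entropy values hold. -/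
open Matrix Kronecker
open scoped ComplexOrder

noncomputable section

/-- Base-2 matrix logarithm of a Hermitian matrix, via the spectral theorem
(with the convention `log 0 = 0`); `0` on non-Hermitian matrices. -/
def mlog2 {n : Type*} [Fintype n] [DecidableEq n] (A : Matrix n n ℂ) : Matrix n n ℂ :=
  if h : A.IsHermitian then
    (h.eigenvectorUnitary : Matrix n n ℂ) *
      Matrix.diagonal (fun i => (Real.logb 2 (h.eigenvalues i) : ℂ)) *
      (star h.eigenvectorUnitary : Matrix n n ℂ)
  else 0

/-- Quantum relative entropy `S(ρ‖σ) = Tr[ρ (log₂ ρ − log₂ σ)]`. -/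
def relEnt {n : Type*} [Fintype n] [DecidableEq n] (ρ σ : Matrix n n ℂ) : ℝ :=
  (Matrix.trace (ρ * (mlog2 ρ - mlog2 σ))).re

/-- Von Neumann entropy `H(ρ) = −Tr[ρ log₂ ρ]`. -/
def vnEnt {n : Type*} [Fintype n] [DecidableEq n] (ρ : Matrix n n ℂ) : ℝ :=
  -(Matrix.trace (ρ * mlog2 ρ)).re

/-- A density matrix: positive semidefinite with unit trace. -/
def IsDensity {n : Type*} [Fintype n] (ρ : Matrix n n ℂ) : Prop :=
  ρ.PosSemidef ∧ ρ.trace = 1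

/-- Partial trace over the second (B) factor. -/
def ptraceB {m n : Type*} [Fintype n] (M : Matrix (m × n) (m × n) ℂ) : Matrix m m ℂ :=
  Matrix.of fun i j => ∑ k, M (i, k) (j, k)

/-- Partial trace over the first (A) factor. -/
def ptraceA {m n : Type*} [Fintype m] (M : Matrix (m × n) (m × n) ℂ) : Matrix n n ℂ :=
  Matrix.of fun a b => ∑ k, M (k, a) (k, b)

/-- The Choi state `(id ⊗ M)(Φ)` of a map `M : M_d(ℂ) → M_{d'}(ℂ)`, where
`Φ = (1/d) ∑_{i,j} |ii⟩⟨jj|` is the maximally entangled state. -/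
def ChoiOf {d d' : ℕ} (M : Matrix (Fin d) (Fin d) ℂ → Matrix (Fin d') (Fin d') ℂ) :
    Matrix (Fin d × Fin d') (Fin d × Fin d') ℂ :=
  Matrix.of fun p q =>
    ((d : ℂ))⁻¹ * M (Matrix.single p.1 q.1 1) p.2 q.2

/-- Complete positivity of a linear map on matrices: every finite ancilla
extension `id_k ⊗ M` maps positive semidefinite matrices to positive
semidefinite matrices. -/
def IsCompletelyPositive {n m : Type*} [Fintype n] [DecidableEq n] [Fintype m] [DecidableEq m]
    (M : Matrix n n ℂ →ₗ[ℂ] Matrix m m ℂ) : Prop :=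
  ∀ (k : ℕ) (X : Matrix (Fin k × n) (Fin k × n) ℂ), X.PosSemidef →
    (Matrix.of fun (p q : Fin k × m) =>
      M (Matrix.of fun a b => X (p.1, a) (q.1, b)) p.2 q.2).PosSemidef

/-- The classical-quantum state `∑_x p_x |x⟩⟨x| ⊗ ρ_x`. -/
def cqState {ι m : Type*} [DecidableEq ι] (p : ι → ℝ) (ρ : ι → Matrix m m ℂ) :
    Matrix (ι × m) (ι × m) ℂ :=
  Matrix.of fun x y => if x.1 = y.1 then (p x.1 : ℂ) * ρ x.1 x.2 y.2 else 0

/-- The maximally entangled two-qubit state `Φ = (1/2) ∑_{i,j} |ii⟩⟨jj|`. -/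
def Phi2 : Matrix (Fin 2 × Fin 2) (Fin 2 × Fin 2) ℂ :=
  Matrix.of fun p q => if p.1 = p.2 ∧ q.1 = q.2 then (1 / 2 : ℂ) else 0

end

/-! All matrices involved are diagonal, so the quantum relative entropies reduce to classical
ones: on a diagonal matrix the functional calculus acts entrywise, because a function agrees with
a polynomial on the finitely many diagonal entries. The map `Ξ(Q) = 𝕀 ⊗ ⟨1|Q|1⟩_A` is completely
positive since `(id ⊗ Ξ)(X)` is a principal submatrix (with repeated indices) of `X ⊗ 𝕀`, and
`Tr Ξ(Q) = 2 ⟨1|Tr_B Q|1⟩ = 1` for every Choi state `Q`. It sends the distribution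
`(1/4, 1/4, 0, 1/2)` to `(0, 1/2, 0, 1/2)`, raising the divergence from the uniform distribution
from `1/2` to `1`. -/

namespace Matrix

variable {n 𝕜 : Type*} [DecidableEq n] [RCLike 𝕜]

theorem isHermitian_diagonal_ofReal (d : n → ℝ) : (diagonal fun i => (d i : 𝕜)).IsHermitian :=
  isHermitian_diagonal_iff.mpr fun i => RCLike.conj_ofReal (d i)

variable [Fintype n]

theorem cfc_diagonal_ofReal (f : ℝ → ℝ) (d : n → ℝ) :
    cfc f (diagonal fun i => (d i : 𝕜)) = diagonal fun i => (f (d i) : 𝕜) := by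
  obtain ⟨p, hp⟩ : ∃ p : Polynomial ℝ, ∀ i, p.eval (d i) = f (d i) :=
    ⟨Lagrange.interpolate (Finset.univ.image d) id f, fun i =>
      Lagrange.eval_interpolate_at_node f (Set.injOn_id _)
        (Finset.mem_image_of_mem d (Finset.mem_univ i))⟩
  have hspec : spectrum ℝ (diagonal fun i => (d i : 𝕜)) ⊆ Set.range d := by
    intro x hx
    rw [← spectrum.preimage_algebraMap 𝕜, Set.mem_preimage, spectrum_diagonal] at hx
    obtain ⟨i, hi⟩ := hx
    exact ⟨i, by simpa using hi⟩
  have := (isHermitian_diagonal_ofReal (𝕜 := 𝕜) d).isSelfAdjoint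
  calc cfc f (diagonal fun i => (d i : 𝕜))
      = cfc (fun x => p.eval x) (diagonal fun i => (d i : 𝕜)) := by
        refine cfc_congr fun x hx => ?_
        obtain ⟨i, rfl⟩ := hspec hx
        exact (hp i).symm
    _ = Polynomial.aeval (diagonal fun i => (d i : 𝕜)) p := cfc_polynomial p _
    _ = diagonal fun i => (f (d i) : 𝕜) := by
        rw [show (diagonal fun i => (d i : 𝕜)) = diagonalAlgHom ℝ (fun i => (d i : 𝕜)) from rfl,
          Polynomial.aeval_algHom_apply, Polynomial.aeval_pi_apply]
        simp only [Polynomial.aeval_ofReal, hp, diagonalAlgHom_apply]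

end Matrix

theorem mlog2_eq_cfc {n : Type*} [Fintype n] [DecidableEq n] {A : Matrix n n ℂ}
    (hA : A.IsHermitian) : mlog2 A = cfc (Real.logb 2) A := by
  rw [mlog2, dif_pos hA, hA.cfc_eq, Matrix.IsHermitian.cfc, Unitary.conjStarAlgAut_apply]
  rfl

section Diagonal

variable {n : Type*} [Fintype n] [DecidableEq n]

theorem relEnt_diagonal (p q : n → ℝ) :
    relEnt (diagonal fun i => (p i : ℂ)) (diagonal fun i => (q i : ℂ)) =
      ∑ i, p i * (Real.logb 2 (p i) - Real.logb 2 (q i)) := by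
  rw [relEnt, mlog2_eq_cfc (A := diagonal fun i => (p i : ℂ)) (isHermitian_diagonal_ofReal p),
    mlog2_eq_cfc (A := diagonal fun i => (q i : ℂ)) (isHermitian_diagonal_ofReal q)]
  have hcfc := cfc_diagonal_ofReal (n := n) (𝕜 := ℂ) (Real.logb 2)
  simp only [Complex.coe_algebraMap] at hcfc
  rw [hcfc, hcfc, diagonal_sub, diagonal_mul_diagonal, trace_diagonal, Complex.re_sum]
  simp only [← Complex.ofReal_sub, ← Complex.ofReal_mul, Complex.ofReal_re]

theorem isDensity_diagonal_ofReal {p : n → ℝ} (hp : ∀ i, 0 ≤ p i) (hsum : ∑ i, p i = 1) :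
    IsDensity (diagonal fun i => (p i : ℂ)) :=
  ⟨posSemidef_diagonal_iff.mpr fun i => Complex.zero_le_real.mpr (hp i), by
    rw [trace_diagonal, ← Complex.ofReal_sum, hsum, Complex.ofReal_one]⟩

theorem ptraceB_diagonal {m : Type*} [DecidableEq m] (p : m × n → ℂ) :
    ptraceB (diagonal p) = diagonal fun i => ∑ b, p (i, b) := by
  ext i j
  by_cases h : i = j <;> simp [ptraceB, h]

end Diagonal

section OneKroneckerBlock

variable {k m n : Type*} [DecidableEq k]

variable (k) in
def oneKroneckerBlock (a : m) :
    Matrix (m × n) (m × n) ℂ →ₗ[ℂ] Matrix (k × n) (k × n) ℂ where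
  toFun Q := 1 ⊗ₖ Q.submatrix (a, ·) (a, ·)
  map_add' Q R := by ext; simp [mul_add]
  map_smul' c Q := by ext; simp [mul_left_comm]

theorem oneKroneckerBlock_apply (a : m) (Q : Matrix (m × n) (m × n) ℂ) (p q : k × n) :
    oneKroneckerBlock k a Q p q = (1 : Matrix k k ℂ) p.1 q.1 * Q (a, p.2) (a, q.2) :=
  rfl

theorem oneKroneckerBlock_diagonal [DecidableEq m] [DecidableEq n] (a : m) (d : m × n → ℂ) :
    oneKroneckerBlock k a (diagonal d) = diagonal fun p => d (a, p.2) := by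
  show 1 ⊗ₖ (diagonal d).submatrix _ _ = _
  rw [submatrix_diagonal _ _ (Prod.mk_right_injective a), ← diagonal_one,
    diagonal_kronecker_diagonal]
  simp only [Function.comp_apply, one_mul]

theorem trace_oneKroneckerBlock [Fintype k] [Fintype n] (a : m) (Q : Matrix (m × n) (m × n) ℂ) :
    (oneKroneckerBlock k a Q).trace = Fintype.card k * ptraceB Q a a := by
  rw [oneKroneckerBlock, LinearMap.coe_mk, AddHom.coe_mk, trace_kronecker, trace_one]
  rfl

theorem isCompletelyPositive_oneKroneckerBlock [Fintype k] [Fintype m] [DecidableEq m]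
    [Fintype n] [DecidableEq n] (a : m) :
    IsCompletelyPositive (oneKroneckerBlock (n := n) k a) := by
  intro K X hX
  suffices h : (of fun p q : Fin K × (k × n) =>
      oneKroneckerBlock k a (of fun b c => X (p.1, b) (q.1, c)) p.2 q.2) =
      (X ⊗ₖ (1 : Matrix k k ℂ)).submatrix (fun p => ((p.1, (a, p.2.2)), p.2.1))
        (fun p => ((p.1, (a, p.2.2)), p.2.1)) by
    rw [h]
    exact (hX.kronecker PosSemidef.one).submatrix _
  ext p q
  simp only [of_apply, oneKroneckerBlock_apply, submatrix_apply, kroneckerMap_apply]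
  exact mul_comm _ _

end OneKroneckerBlock

namespace ChoiDivergenceExample

noncomputable def probM : Fin 2 × Fin 2 → ℝ := fun p => ![![1 / 4, 1 / 4], ![0, 1 / 2]] p.1 p.2

noncomputable def probN : Fin 2 × Fin 2 → ℝ := fun _ => 1 / 4

theorem logb_two_half : Real.logb 2 (1 / 2) = -1 := by
  rw [one_div, Real.logb_inv, Real.logb_self_eq_one one_lt_two]

theorem logb_two_quarter : Real.logb 2 (1 / 4) = -2 := by
  rw [one_div, Real.logb_inv, show (4 : ℝ) = 2 ^ 2 by norm_num, Real.logb_pow,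
    Real.logb_self_eq_one one_lt_two]
  norm_num

theorem relEnt_probM_probN :
    relEnt (diagonal fun p => (probM p : ℂ)) (diagonal fun p => (probN p : ℂ)) = 1 / 2 := by
  rw [relEnt_diagonal]
  norm_num [Fintype.sum_prod_type, probM, probN, logb_two_half, logb_two_quarter]

theorem relEnt_block_probM_probN :
    relEnt (diagonal fun p : Fin 2 × Fin 2 => (probM (1, p.2) : ℂ))
      (diagonal fun p : Fin 2 × Fin 2 => (probN (1, p.2) : ℂ)) = 1 := by
  rw [relEnt_diagonal]
  norm_num [Fintype.sum_prod_type, probM, probN, logb_two_half, logb_two_quarter]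

end ChoiDivergenceExample

open ChoiDivergenceExample in
/-- there exist two-qubit Choi states `Υ^M`, `Υ^N` and a completely
positive linear map `Ξ̃` preserving the trace of all Choi states with
`S(Ξ̃(Υ^M)‖Ξ̃(Υ^N)) = 1 > 1/2 = S(Υ^M‖Υ^N)`; concretely
`Υ^M = (1/4)(|00⟩⟨00| + |01⟩⟨01| + 2|11⟩⟨11|)`, `Υ^N = 𝕀/4`, and
`Ξ̃(Q) = (𝕀/2) ⊗ 2⟨1|_A Q|1⟩_A`, with `Ξ̃(Υ^M) = (𝕀/2) ⊗ |1⟩⟨1|` and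
`Ξ̃(Υ^N) = 𝕀/4`. -/
theorem choi_divergence_not_monotone :
    ∃ (ΥM ΥN : Matrix (Fin 2 × Fin 2) (Fin 2 × Fin 2) ℂ)
      (Ξ : Matrix (Fin 2 × Fin 2) (Fin 2 × Fin 2) ℂ →ₗ[ℂ]
            Matrix (Fin 2 × Fin 2) (Fin 2 × Fin 2) ℂ),
      IsDensity ΥM ∧ IsDensity ΥN ∧
      ptraceB ΥM = (2 : ℂ)⁻¹ • (1 : Matrix (Fin 2) (Fin 2) ℂ) ∧
      ptraceB ΥN = (2 : ℂ)⁻¹ • (1 : Matrix (Fin 2) (Fin 2) ℂ) ∧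
      IsCompletelyPositive Ξ ∧
      (∀ Q : Matrix (Fin 2 × Fin 2) (Fin 2 × Fin 2) ℂ, IsDensity Q →
        ptraceB Q = (2 : ℂ)⁻¹ • (1 : Matrix (Fin 2) (Fin 2) ℂ) →
          (Ξ Q).trace = Q.trace) ∧
      ΥM = (Matrix.of fun p q : Fin 2 × Fin 2 =>
        if p = q then
          (if p = (0, 0) then (1 / 4 : ℂ) else
            if p = (0, 1) then 1 / 4 else if p = (1, 1) then 1 / 2 else 0)
        else 0) ∧
      ΥN = (4 : ℂ)⁻¹ • (1 : Matrix (Fin 2 × Fin 2) (Fin 2 × Fin 2) ℂ) ∧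
      (∀ Q, Ξ Q = Matrix.of fun p q =>
        ((2 : ℂ)⁻¹ * (if p.1 = q.1 then 1 else 0)) * (2 * Q (1, p.2) (1, q.2))) ∧
      Ξ ΥM = (Matrix.of fun p q : Fin 2 × Fin 2 =>
        if p.1 = q.1 ∧ p.2 = 1 ∧ q.2 = 1 then (1 / 2 : ℂ) else 0) ∧
      Ξ ΥN = (4 : ℂ)⁻¹ • (1 : Matrix (Fin 2 × Fin 2) (Fin 2 × Fin 2) ℂ) ∧
      relEnt ΥM ΥN = 1 / 2 ∧
      relEnt (Ξ ΥM) (Ξ ΥN) = 1 ∧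
      relEnt ΥM ΥN < relEnt (Ξ ΥM) (Ξ ΥN) := by
  have hN : (diagonal fun p => (probN p : ℂ)) = (4 : ℂ)⁻¹ • 1 := by
    rw [smul_one_eq_diagonal]; simp [probN]
  have hΞN : oneKroneckerBlock (Fin 2) 1 (diagonal fun p => (probN p : ℂ)) = (4 : ℂ)⁻¹ • 1 := by
    rw [oneKroneckerBlock_diagonal, ← hN]; rfl
  have hrel : relEnt (oneKroneckerBlock (Fin 2) 1 (diagonal fun p => (probM p : ℂ)))
      (oneKroneckerBlock (Fin 2) 1 (diagonal fun p => (probN p : ℂ))) = 1 := by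
    simpa only [oneKroneckerBlock_diagonal] using relEnt_block_probM_probN
  refine ⟨diagonal fun p => (probM p : ℂ), diagonal fun p => (probN p : ℂ),
    oneKroneckerBlock (Fin 2) 1, ?_, ?_, ?_, ?_, isCompletelyPositive_oneKroneckerBlock 1,
    fun Q hQ hpt => ?_, ?_, hN, fun Q => ?_, ?_, hΞN, relEnt_probM_probN, hrel, ?_⟩
  · exact isDensity_diagonal_ofReal (by simp [probM, Fin.forall_fin_two])
      (by norm_num [Fintype.sum_prod_type, probM])
  · exact isDensity_diagonal_ofReal (by simp [probN]) (by simp [probN])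
  · rw [ptraceB_diagonal, smul_one_eq_diagonal]
    congr 1; funext i; fin_cases i <;> norm_num [probM]
  · rw [ptraceB_diagonal, smul_one_eq_diagonal]
    congr 1; funext i; norm_num [probN]
  · rw [trace_oneKroneckerBlock, hpt, hQ.2]; simp
  · ext ⟨i, a⟩ ⟨j, b⟩
    fin_cases i <;> fin_cases a <;> fin_cases j <;> fin_cases b <;> simp [probM]
  · ext p q; rw [oneKroneckerBlock_apply, one_apply]; simp
  · rw [oneKroneckerBlock_diagonal]
    ext ⟨i, a⟩ ⟨j, b⟩
    fin_cases i <;> fin_cases a <;> fin_cases j <;> fin_cases b <;> simp [probM]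
  · rw [relEnt_probM_probN, hrel]; norm_num
end

section
/- Choi-divergence upper bound on generalized comb divergences (channel case n = 1): let D be a state divergence that is monotone under channels and satisfies the direct-sum property D(∑_x p_x|x⟩⟨x|⊗ρ¹_x ‖ ∑_x p_x|x⟩⟨x|⊗ρ²_x) = ∑_x p_x D(ρ¹_x‖ρ²_x). Then for any two channels M, N : M_d(ℂ) → M_{d'}(ℂ) and any input state ρ_{RA} (with reference system R), D(M(ρ_{RA}) ‖ N(ρ_{RA})) ≤ d · D(Υ^M ‖ Υ^N), where Υ^M, Υ^N are the Choi states; consequently sup_ρ D(M(ρ)‖N(ρ)) ≤ d · D(Υ^M‖Υ^N). -/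
open Matrix Kronecker
open scoped ComplexOrder

noncomputable section
/-- The extension `id_R ⊗ M` of a map `M` to a joint input with reference `R`. -/
def extChan {R : Type*} {d d' : ℕ}
    (M : Matrix (Fin d) (Fin d) ℂ →ₗ[ℂ] Matrix (Fin d') (Fin d') ℂ)
    (ρ : Matrix (R × Fin d) (R × Fin d) ℂ) : Matrix (R × Fin d') (R × Fin d') ℂ :=
  Matrix.of fun p q => M (Matrix.of fun a b => ρ (p.1, a) (q.1, b)) p.2 q.2
end


/-! Write `ρ_{RA} = Wᴴ W` and let `X_e : A → R` be the `e`-th column of `Wᴴ` reshaped into an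
operator, so that `∑ₑ (X_e ⊗ 1) Φ (X_e ⊗ 1)ᴴ = ρ_{RA} / d` for the maximally entangled state `Φ`.
The `X_e ⊗ 1` act on the reference system only, so they commute with `id ⊗ M` and send the Choi
state `Υ^M = (id ⊗ M)(Φ)` to `M(ρ_{RA}) / d`. Since `∑ₑ X_eᴴ X_e` is positive with trace
`Tr ρ_{RA} = 1`, it is at most `1`, and a branch that measures the complementary effect and
prepares a fixed state `τ` completes these Kraus operators to a channel `Z` with
`Z(Υ^M) = 1/d |0⟩⟨0| ⊗ M(ρ_{RA}) + (1 - 1/d) |1⟩⟨1| ⊗ τ`. Monotonicity of `D` under `Z` and the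
direct-sum property give `D(M(ρ)‖N(ρ)) / d + (1 - 1/d) D(τ‖τ) ≤ D(Υ^M‖Υ^N)`. -/

section KrausMap
variable {ι n m : Type*} [Fintype ι] [Fintype n]

def krausMap (K : ι → Matrix m n ℂ) : Matrix n n ℂ →ₗ[ℂ] Matrix m m ℂ where
  toFun X := ∑ e, K e * X * (K e)ᴴ
  map_add' X Y := by simp [Matrix.mul_add, Matrix.add_mul, Finset.sum_add_distrib]
  map_smul' c X := by simp [Finset.smul_sum]

lemma krausMap_apply (K : ι → Matrix m n ℂ) (X : Matrix n n ℂ) :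
    krausMap K X = ∑ e, K e * X * (K e)ᴴ := rfl

lemma krausMap_blockwise {R : Type*} [Fintype R] [DecidableEq R] (K : ι → Matrix m n ℂ)
    (X : Matrix (R × n) (R × n) ℂ) :
    of (fun p q : R × m => krausMap K (of fun a b => X (p.1, a) (q.1, b)) p.2 q.2) =
      ∑ e, ((1 : Matrix R R ℂ) ⊗ₖ K e) * X * ((1 : Matrix R R ℂ) ⊗ₖ K e)ᴴ := by
  ext p q
  simp [krausMap_apply, Matrix.sum_apply, mul_apply, Fintype.sum_prod_type, one_apply,
    Finset.sum_mul, apply_ite (starRingEnd ℂ), mul_ite]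

lemma isCompletelyPositive_krausMap [DecidableEq n] [Fintype m] [DecidableEq m]
    (K : ι → Matrix m n ℂ) : IsCompletelyPositive (krausMap K) := fun k X hX => by
  rw [krausMap_blockwise]
  exact posSemidef_sum _ fun e _ => hX.mul_mul_conjTranspose_same _

lemma trace_krausMap [Fintype m] (K : ι → Matrix m n ℂ) (X : Matrix n n ℂ) :
    (krausMap K X).trace = ((∑ e, (K e)ᴴ * K e) * X).trace := by
  simp_rw [krausMap_apply, trace_sum, Finset.sum_mul, trace_sum, trace_mul_cycle _ X]

def measurePrepare (Q : Matrix n n ℂ) (τ : Matrix m m ℂ) : Matrix n n ℂ →ₗ[ℂ] Matrix m m ℂ where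
  toFun X := (Q * X).trace • τ
  map_add' X Y := by simp [Matrix.mul_add, add_smul]
  map_smul' c X := by simp [smul_smul]

lemma measurePrepare_apply (Q : Matrix n n ℂ) (τ : Matrix m m ℂ) (X : Matrix n n ℂ) :
    measurePrepare Q τ X = (Q * X).trace • τ := rfl

lemma krausMap_eq_measurePrepare {k l : Type*} [Fintype m] [Fintype k] [DecidableEq k]
    [Fintype l] [DecidableEq l] (T : Matrix k n ℂ) (S : Matrix l m ℂ) :
    krausMap (fun uv : l × k => Sᴴ * single uv.1 uv.2 (1 : ℂ) * T) =
      measurePrepare (Tᴴ * T) (Sᴴ * S) := by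
  refine LinearMap.ext fun X => ?_
  have hterm (u : l) (v : k) :
      Sᴴ * single u v (1 : ℂ) * T * X * (Sᴴ * single u v (1 : ℂ) * T)ᴴ =
        (T * X * Tᴴ) v v • (Sᴴ * single u u (1 : ℂ) * S) := by
    have h : Sᴴ * single u v (1 : ℂ) * T * X * (Sᴴ * single u v (1 : ℂ) * T)ᴴ =
        Sᴴ * (single u v (1 : ℂ) * (T * X * Tᴴ) * single v u (1 : ℂ)) * S := by
      simp [conjTranspose_mul, Matrix.mul_assoc]
    have hs : single u u ((T * X * Tᴴ) v v) = (T * X * Tᴴ) v v • single u u (1 : ℂ) := by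
      rw [smul_single, smul_eq_mul, mul_one]
    rw [h, single_mul_mul_single, one_mul, mul_one, hs, Matrix.mul_smul, Matrix.smul_mul]
  have htrace : ∑ v, (T * X * Tᴴ) v v = (Tᴴ * T * X).trace := trace_mul_cycle T X Tᴴ
  rw [krausMap_apply, measurePrepare_apply]
  simp_rw [hterm]
  rw [Fintype.sum_prod_type]
  simp_rw [← Finset.sum_smul, htrace]
  rw [← Finset.smul_sum, ← Matrix.sum_mul, ← Matrix.mul_sum, sum_single_one, Matrix.mul_one]

end KrausMap

section CompletelyPositive
variable {n m l : Type*} [Fintype n] [DecidableEq n] [Fintype m] [DecidableEq m]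

lemma IsCompletelyPositive.comp [Fintype l] [DecidableEq l] {E : Matrix n n ℂ →ₗ[ℂ] Matrix m m ℂ}
    {F : Matrix m m ℂ →ₗ[ℂ] Matrix l l ℂ} (hF : IsCompletelyPositive F)
    (hE : IsCompletelyPositive E) : IsCompletelyPositive (F ∘ₗ E) :=
  fun k X hX => hF k _ (hE k X hX)

lemma IsCompletelyPositive.sum {ι : Type*} {E : ι → Matrix n n ℂ →ₗ[ℂ] Matrix m m ℂ}
    (s : Finset ι) (hE : ∀ i ∈ s, IsCompletelyPositive (E i)) :
    IsCompletelyPositive (∑ i ∈ s, E i) := fun k X hX => by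
  convert posSemidef_sum s fun i hi => hE i hi k X hX using 1
  ext p q
  simp [Matrix.sum_apply]

open scoped MatrixOrder in
lemma Matrix.PosSemidef.exists_eq_conjTranspose_mul_self {A : Matrix n n ℂ} (hA : A.PosSemidef) :
    ∃ B : Matrix n n ℂ, A = Bᴴ * B :=
  CStarAlgebra.nonneg_iff_eq_star_mul_self.mp hA.nonneg

open scoped MatrixOrder in
lemma Matrix.PosSemidef.one_sub_of_trace_eq_one {A : Matrix n n ℂ} (hA : A.PosSemidef)
    (htr : A.trace = 1) : (1 - A).PosSemidef := by
  rw [← le_iff, CFC.le_one_iff (R := ℝ) A hA.1, hA.1.spectrum_real_eq_range_eigenvalues]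
  rintro _ ⟨i, rfl⟩
  have hsum : ∑ j, hA.1.eigenvalues j = 1 := by
    have h := hA.1.trace_eq_sum_eigenvalues
    rw [htr, ← RCLike.ofReal_sum] at h
    exact RCLike.ofReal_injective (h.symm.trans RCLike.ofReal_one.symm)
  rw [← hsum]
  exact Finset.single_le_sum (fun j _ => hA.eigenvalues_nonneg j) (Finset.mem_univ i)

lemma isCompletelyPositive_measurePrepare {Q : Matrix n n ℂ} {τ : Matrix m m ℂ}
    (hQ : Q.PosSemidef) (hτ : τ.PosSemidef) : IsCompletelyPositive (measurePrepare Q τ) := by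
  obtain ⟨T, rfl⟩ := hQ.exists_eq_conjTranspose_mul_self
  obtain ⟨S, rfl⟩ := hτ.exists_eq_conjTranspose_mul_self
  rw [← krausMap_eq_measurePrepare]
  exact isCompletelyPositive_krausMap _

end CompletelyPositive

def flagIsometry {ι m : Type*} [DecidableEq ι] [DecidableEq m] (i : ι) : Matrix (ι × m) m ℂ :=
  of fun p q => if p = (i, q) then 1 else 0

section Instrument
variable {ι n m : Type*} [Fintype ι] [DecidableEq ι] [Fintype m] [DecidableEq m]

lemma flagIsometry_conjTranspose_mul (i : ι) :
    (flagIsometry i : Matrix (ι × m) m ℂ)ᴴ * (flagIsometry i : Matrix (ι × m) m ℂ) = 1 := by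
  ext a b
  simp [flagIsometry, mul_apply, one_apply, apply_ite (starRingEnd ℂ), Prod.ext_iff,
    Fintype.sum_prod_type, ite_and, eq_comm]

def instrument (E : ι → Matrix n n ℂ →ₗ[ℂ] Matrix m m ℂ) :
    Matrix n n ℂ →ₗ[ℂ] Matrix (ι × m) (ι × m) ℂ :=
  ∑ i, krausMap (fun _ : Unit => flagIsometry i) ∘ₗ E i

lemma instrument_apply (E : ι → Matrix n n ℂ →ₗ[ℂ] Matrix m m ℂ) (X : Matrix n n ℂ) :
    instrument E X = of fun p q => if p.1 = q.1 then E p.1 X p.2 q.2 else 0 := by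
  ext p q
  by_cases h : p.1 = q.1 <;>
    simp [instrument, krausMap_apply, flagIsometry, Matrix.sum_apply, mul_apply,
      apply_ite (starRingEnd ℂ), Prod.ext_iff, ite_and, h]

lemma isCompletelyPositive_instrument [Fintype n] [DecidableEq n]
    {E : ι → Matrix n n ℂ →ₗ[ℂ] Matrix m m ℂ} (hE : ∀ i, IsCompletelyPositive (E i)) :
    IsCompletelyPositive (instrument E) :=
  IsCompletelyPositive.sum _ fun i _ => (isCompletelyPositive_krausMap _).comp (hE i)

lemma trace_instrument (E : ι → Matrix n n ℂ →ₗ[ℂ] Matrix m m ℂ) (X : Matrix n n ℂ) :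
    (instrument E X).trace = ∑ i, (E i X).trace := by
  simp [instrument, trace_sum, trace_krausMap, flagIsometry_conjTranspose_mul]

lemma instrument_apply_eq_cqState {E : ι → Matrix n n ℂ →ₗ[ℂ] Matrix m m ℂ} {X : Matrix n n ℂ}
    {p : ι → ℝ} {σ : ι → Matrix m m ℂ} (h : ∀ i, E i X = (p i : ℂ) • σ i) :
    instrument E X = cqState p σ := by
  ext x y
  simp [instrument_apply, cqState, h]

end Instrument

noncomputable def maxEntangled (d : ℕ) : Matrix (Fin d × Fin d) (Fin d × Fin d) ℂ :=
  of fun p q => if p.1 = p.2 ∧ q.1 = q.2 then (d : ℂ)⁻¹ else 0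

lemma isDensity_maxEntangled {d : ℕ} (hd : 0 < d) : IsDensity (maxEntangled d) := by
  let ω : Fin d × Fin d → ℂ := fun p => if p.1 = p.2 then 1 else 0
  constructor
  · have h : maxEntangled d = (d : ℂ)⁻¹ • vecMulVec ω (star ω) := by
      ext p q
      simp only [maxEntangled, ω, of_apply, Matrix.smul_apply, vecMulVec_apply, Pi.star_apply]
      split_ifs <;> simp_all
    rw [h]
    exact (posSemidef_vecMulVec_self_star ω).smul (by positivity)
  · simp [maxEntangled, trace, Fintype.sum_prod_type, hd.ne']

section ExtChan
variable {R : Type*} {d d' : ℕ} (L : Matrix (Fin d) (Fin d) ℂ →ₗ[ℂ] Matrix (Fin d') (Fin d') ℂ)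

lemma extChan_sum {ι : Type*} (s : Finset ι) (Y : ι → Matrix (R × Fin d) (R × Fin d) ℂ) :
    extChan L (∑ i ∈ s, Y i) = ∑ i ∈ s, extChan L (Y i) := by
  ext p q
  have h : (of fun a b => (∑ i ∈ s, Y i) (p.1, a) (q.1, b)) =
      ∑ i ∈ s, of fun a b => Y i (p.1, a) (q.1, b) := by
    ext a b
    simp [Matrix.sum_apply]
  simp only [extChan, of_apply]
  rw [h, map_sum, Matrix.sum_apply, Matrix.sum_apply]
  rfl

lemma extChan_smul (c : ℂ) (Y : Matrix (R × Fin d) (R × Fin d) ℂ) :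
    extChan L (c • Y) = c • extChan L Y := by
  ext p q
  have h : (of fun a b => (c • Y) (p.1, a) (q.1, b)) = c • of fun a b => Y (p.1, a) (q.1, b) := by
    ext a b
    simp
  simp only [extChan, of_apply]
  rw [h, map_smul, Matrix.smul_apply, Matrix.smul_apply]
  rfl

lemma extChan_kronecker_one_mul_mul {S : Type*} [Fintype S] (A : Matrix R S ℂ)
    (Y : Matrix (S × Fin d) (S × Fin d) ℂ) (B : Matrix S R ℂ) :
    extChan L ((A ⊗ₖ (1 : Matrix (Fin d) (Fin d) ℂ)) * Y * (B ⊗ₖ (1 : Matrix (Fin d) (Fin d) ℂ))) =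
      (A ⊗ₖ (1 : Matrix (Fin d') (Fin d') ℂ)) * extChan L Y *
        (B ⊗ₖ (1 : Matrix (Fin d') (Fin d') ℂ)) := by
  ext p q
  have h : (of fun a b => ((A ⊗ₖ (1 : Matrix (Fin d) (Fin d) ℂ)) * Y *
      (B ⊗ₖ (1 : Matrix (Fin d) (Fin d) ℂ))) (p.1, a) (q.1, b)) =
      ∑ s, ∑ s', (A p.1 s * B s' q.1) • of fun a b => Y (s, a) (s', b) := by
    ext a b
    simp only [mul_apply, kroneckerMap_apply, one_apply, mul_ite, mul_one, mul_zero, ite_mul,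
      zero_mul, Fintype.sum_prod_type, Finset.sum_ite_eq, Finset.mem_univ, ↓reduceIte,
      Finset.sum_mul, Finset.sum_ite_eq', of_apply, smul_of, Matrix.sum_apply, Pi.smul_apply,
      smul_eq_mul]
    rw [Finset.sum_comm]
    exact Finset.sum_congr rfl fun _ _ => Finset.sum_congr rfl fun _ _ => by ring
  simp only [extChan, of_apply]
  rw [h]
  simp only [map_sum, map_smul, Matrix.sum_apply, Matrix.smul_apply, smul_eq_mul]
  simp only [mul_apply, kroneckerMap_apply, one_apply, mul_ite, mul_one, mul_zero, of_apply,
    ite_mul, zero_mul, Fintype.sum_prod_type, Finset.sum_ite_eq, Finset.mem_univ, ↓reduceIte,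
    Finset.sum_mul, Finset.sum_ite_eq']
  rw [Finset.sum_comm]
  exact Finset.sum_congr rfl fun _ _ => Finset.sum_congr rfl fun _ _ => by ring

lemma krausMap_kronecker_one_extChan {S κ : Type*} [Fintype S] [Fintype κ]
    (K : κ → Matrix R S ℂ) (Y : Matrix (S × Fin d) (S × Fin d) ℂ) :
    krausMap (fun e => K e ⊗ₖ (1 : Matrix (Fin d') (Fin d') ℂ)) (extChan L Y) =
      extChan L (krausMap (fun e => K e ⊗ₖ (1 : Matrix (Fin d) (Fin d) ℂ)) Y) := by
  simp only [krausMap_apply, extChan_sum, conjTranspose_kronecker, conjTranspose_one,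
    extChan_kronecker_one_mul_mul]

lemma extChan_maxEntangled : extChan L (maxEntangled d) = ChoiOf L := by
  ext p q
  have h : (of fun a b => maxEntangled d (p.1, a) (q.1, b)) = (d : ℂ)⁻¹ • single p.1 q.1 1 := by
    ext a b
    simp [maxEntangled, single_apply, eq_comm]
  simp only [extChan, ChoiOf, of_apply, h, map_smul, Matrix.smul_apply, smul_eq_mul]

variable {L}

lemma IsCompletelyPositive.posSemidef_extChan [Fintype R] (hL : IsCompletelyPositive L)
    {Y : Matrix (R × Fin d) (R × Fin d) ℂ} (hY : Y.PosSemidef) : (extChan L Y).PosSemidef := by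
  let e := Fintype.equivFin R
  have h : extChan L Y =
      (extChan L (Y.submatrix (Prod.map e.symm id) (Prod.map e.symm id))).submatrix
        (Prod.map e id) (Prod.map e id) := by
    ext p q
    simp [extChan]
  rw [h]
  exact (hL _ _ (hY.submatrix _)).submatrix _

lemma trace_extChan [Fintype R] (hL : ∀ X, (L X).trace = X.trace)
    (Y : Matrix (R × Fin d) (R × Fin d) ℂ) : (extChan L Y).trace = Y.trace := by
  simp only [trace, diag, extChan, of_apply, Fintype.sum_prod_type]
  exact Finset.sum_congr rfl fun r _ => hL _

lemma trace_choiOf (hd : 0 < d) (hL : ∀ X, (L X).trace = X.trace) : (ChoiOf L).trace = 1 := by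
  rw [← extChan_maxEntangled, trace_extChan hL, (isDensity_maxEntangled hd).2]

lemma IsDensity.extChan [Fintype R] (hcp : IsCompletelyPositive L)
    (htp : ∀ X, (L X).trace = X.trace) {Y : Matrix (R × Fin d) (R × Fin d) ℂ} (hY : IsDensity Y) :
    IsDensity (extChan L Y) :=
  ⟨hcp.posSemidef_extChan hY.1, (trace_extChan htp Y).trans hY.2⟩

lemma isDensity_choiOf (hd : 0 < d) (hcp : IsCompletelyPositive L)
    (htp : ∀ X, (L X).trace = X.trace) : IsDensity (ChoiOf L) :=
  extChan_maxEntangled L ▸ (isDensity_maxEntangled hd).extChan hcp htp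

end ExtChan

lemma sum_kronecker_one_conjTranspose_mul_self {R S κ n : Type*} [Fintype R] [Fintype κ]
    [Fintype n] [DecidableEq n] (K : κ → Matrix R S ℂ) :
    ∑ e, (K e ⊗ₖ (1 : Matrix n n ℂ))ᴴ * (K e ⊗ₖ (1 : Matrix n n ℂ)) =
      (∑ e, (K e)ᴴ * K e) ⊗ₖ (1 : Matrix n n ℂ) := by
  simp only [conjTranspose_kronecker, conjTranspose_one, ← mul_kronecker_mul, Matrix.mul_one]
  ext p q
  simp [Matrix.sum_apply, Finset.sum_mul]

lemma one_sub_kronecker_one {m n : Type*} [DecidableEq m] [DecidableEq n] (A : Matrix m m ℂ) :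
    1 - A ⊗ₖ (1 : Matrix n n ℂ) = (1 - A) ⊗ₖ (1 : Matrix n n ℂ) := by
  ext p q
  simp only [Matrix.sub_apply, kroneckerMap_apply, one_apply, Prod.ext_iff]
  split_ifs <;> simp_all

section Steering
variable {κ R : Type*} [Fintype κ] {d d' : ℕ}

def steeringKraus (W : Matrix κ (R × Fin d) ℂ) (e : κ) : Matrix R (Fin d) ℂ :=
  of fun r i => star (W e (r, i))

lemma krausMap_steeringKraus_maxEntangled (W : Matrix κ (R × Fin d) ℂ) :
    krausMap (fun e => steeringKraus W e ⊗ₖ (1 : Matrix (Fin d) (Fin d) ℂ)) (maxEntangled d) =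
      (d : ℂ)⁻¹ • (Wᴴ * W) := by
  ext p q
  simp [krausMap_apply, steeringKraus, maxEntangled, Matrix.sum_apply, mul_apply,
    Fintype.sum_prod_type, one_apply, ite_and, apply_ite (starRingEnd ℂ), Finset.mul_sum,
    mul_comm, mul_left_comm]

lemma trace_sum_steeringKraus_conjTranspose_mul_self [Fintype R] (W : Matrix κ (R × Fin d) ℂ) :
    (∑ e, (steeringKraus W e)ᴴ * steeringKraus W e).trace = (Wᴴ * W).trace := by
  rw [trace_sum, trace_mul_comm]
  refine Finset.sum_congr rfl fun e _ => ?_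
  simp only [trace, diag_apply, steeringKraus, mul_apply, conjTranspose_apply, of_apply,
    star_star, Fintype.sum_prod_type]
  exact Finset.sum_comm

lemma krausMap_steeringKraus_choiOf [Fintype R] (W : Matrix κ (R × Fin d) ℂ)
    (L : Matrix (Fin d) (Fin d) ℂ →ₗ[ℂ] Matrix (Fin d') (Fin d') ℂ) :
    krausMap (fun e => steeringKraus W e ⊗ₖ (1 : Matrix (Fin d') (Fin d') ℂ)) (ChoiOf L) =
      (d : ℂ)⁻¹ • extChan L (Wᴴ * W) := by
  rw [← extChan_maxEntangled, krausMap_kronecker_one_extChan, krausMap_steeringKraus_maxEntangled,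
    extChan_smul]

variable [Fintype R] [DecidableEq R]

noncomputable def steeringChannel (W : Matrix κ (R × Fin d) ℂ)
    (τ : Matrix (R × Fin d') (R × Fin d') ℂ) :
    Matrix (Fin d × Fin d') (Fin d × Fin d') ℂ →ₗ[ℂ]
      Matrix (Fin 2 × (R × Fin d')) (Fin 2 × (R × Fin d')) ℂ :=
  instrument ![krausMap fun e => steeringKraus W e ⊗ₖ (1 : Matrix (Fin d') (Fin d') ℂ),
    measurePrepare
      (1 - (∑ e, (steeringKraus W e)ᴴ * steeringKraus W e) ⊗ₖ (1 : Matrix (Fin d') (Fin d') ℂ)) τ]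

lemma isCompletelyPositive_steeringChannel {W : Matrix κ (R × Fin d) ℂ}
    (hW : (Wᴴ * W).trace = 1) {τ : Matrix (R × Fin d') (R × Fin d') ℂ} (hτ : τ.PosSemidef) :
    IsCompletelyPositive (steeringChannel W τ) := by
  have hG : (1 - ∑ e, (steeringKraus W e)ᴴ * steeringKraus W e).PosSemidef :=
    (posSemidef_sum _ fun e _ => posSemidef_conjTranspose_mul_self _).one_sub_of_trace_eq_one
      ((trace_sum_steeringKraus_conjTranspose_mul_self W).trans hW)
  refine isCompletelyPositive_instrument fun i => ?_
  fin_cases i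
  · exact isCompletelyPositive_krausMap _
  · refine isCompletelyPositive_measurePrepare ?_ hτ
    rw [one_sub_kronecker_one]
    exact hG.kronecker PosSemidef.one

lemma trace_steeringChannel (W : Matrix κ (R × Fin d) ℂ) {τ : Matrix (R × Fin d') (R × Fin d') ℂ}
    (hτ : τ.trace = 1) (X : Matrix (Fin d × Fin d') (Fin d × Fin d') ℂ) :
    (steeringChannel W τ X).trace = X.trace := by
  simp [steeringChannel, trace_instrument, trace_krausMap, measurePrepare_apply, hτ,
    sum_kronecker_one_conjTranspose_mul_self, Matrix.sub_mul, trace_sub]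

lemma steeringChannel_choiOf (hd : 0 < d) {W : Matrix κ (R × Fin d) ℂ} (hW : (Wᴴ * W).trace = 1)
    (τ : Matrix (R × Fin d') (R × Fin d') ℂ)
    {L : Matrix (Fin d) (Fin d) ℂ →ₗ[ℂ] Matrix (Fin d') (Fin d') ℂ}
    (hL : ∀ X, (L X).trace = X.trace) :
    steeringChannel W τ (ChoiOf L) =
      cqState ![(d : ℝ)⁻¹, 1 - (d : ℝ)⁻¹] ![extChan L (Wᴴ * W), τ] := by
  have hsucc := krausMap_steeringKraus_choiOf W L
  have hfail : ((1 - (∑ e, (steeringKraus W e)ᴴ * steeringKraus W e) ⊗ₖ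
      (1 : Matrix (Fin d') (Fin d') ℂ)) * ChoiOf L).trace = 1 - (d : ℂ)⁻¹ := by
    rw [Matrix.sub_mul, Matrix.one_mul, trace_sub, ← sum_kronecker_one_conjTranspose_mul_self,
      ← trace_krausMap, hsucc, trace_smul, trace_extChan hL, hW, trace_choiOf hd hL, smul_eq_mul,
      mul_one]
  refine instrument_apply_eq_cqState fun i => ?_
  fin_cases i
  · simpa using hsucc
  · simp [measurePrepare_apply, hfail]

end Steering

/-- Choi-divergence upper bound on generalized channel
divergences: if `D` is nonnegative on states, monotone under channels, and
satisfies the direct-sum property, then for channels `M, N` and any input state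
`ρ_RA`, `D(M(ρ_RA) ‖ N(ρ_RA)) ≤ d · D(Υ^M ‖ Υ^N)`. -/
theorem choi_divergence_upper_bound {d d' : ℕ} (hd : 0 < d)
    (D : ∀ (n : Type) [Fintype n] [DecidableEq n],
      Matrix n n ℂ → Matrix n n ℂ → ℝ)
    (hnonneg : ∀ (n : Type) [Fintype n] [DecidableEq n]
      (ρ σ : Matrix n n ℂ), IsDensity ρ → IsDensity σ → 0 ≤ D n ρ σ)
    (hmono : ∀ (n m : Type) [Fintype n] [DecidableEq n] [Fintype m] [DecidableEq m]
      (E : Matrix n n ℂ →ₗ[ℂ] Matrix m m ℂ),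
      IsCompletelyPositive E → (∀ X, (E X).trace = X.trace) →
      ∀ ρ σ : Matrix n n ℂ, IsDensity ρ → IsDensity σ →
        D m (E ρ) (E σ) ≤ D n ρ σ)
    (hds : ∀ (n ι : Type) [Fintype n] [DecidableEq n] [Fintype ι] [DecidableEq ι]
      (p : ι → ℝ), (∀ x, 0 ≤ p x) → (∑ x, p x = 1) →
      ∀ ρ₁ ρ₂ : ι → Matrix n n ℂ,
        (∀ x, IsDensity (ρ₁ x)) → (∀ x, IsDensity (ρ₂ x)) →
        D (ι × n) (cqState p ρ₁) (cqState p ρ₂) = ∑ x, p x * D n (ρ₁ x) (ρ₂ x))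
    (M N : Matrix (Fin d) (Fin d) ℂ →ₗ[ℂ] Matrix (Fin d') (Fin d') ℂ)
    (hMcp : IsCompletelyPositive M) (hMtp : ∀ X, (M X).trace = X.trace)
    (hNcp : IsCompletelyPositive N) (hNtp : ∀ X, (N X).trace = X.trace)
    (R : Type) [Fintype R] [DecidableEq R]
    (ρ : Matrix (R × Fin d) (R × Fin d) ℂ) (hρ : IsDensity ρ) :
    D (R × Fin d') (extChan M ρ) (extChan N ρ) ≤
      d * D (Fin d × Fin d') (ChoiOf (⇑M)) (ChoiOf (⇑N)) := by
  obtain ⟨W, rfl⟩ := hρ.1.exists_eq_conjTranspose_mul_self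
  have hMρ := hρ.extChan hMcp hMtp
  have hNρ := hρ.extChan hNcp hNtp
  have hd1 : (d : ℝ)⁻¹ ≤ 1 := inv_le_one_of_one_le₀ (by exact_mod_cast hd)
  -- the failure branch may prepare any fixed state; `M(ρ)` is one at hand
  have hsteer := hmono _ _ (steeringChannel W (extChan M (Wᴴ * W)))
    (isCompletelyPositive_steeringChannel hρ.2 hMρ.1) (trace_steeringChannel W hMρ.2) _ _
    (isDensity_choiOf hd hMcp hMtp) (isDensity_choiOf hd hNcp hNtp)
  rw [steeringChannel_choiOf hd hρ.2 _ hMtp, steeringChannel_choiOf hd hρ.2 _ hNtp,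
    hds _ _ _ (Fin.forall_fin_two.2 ⟨by simp, by simpa using hd1⟩) (by simp) _ _
      (Fin.forall_fin_two.2 ⟨hMρ, hMρ⟩) (Fin.forall_fin_two.2 ⟨hNρ, hMρ⟩),
    Fin.sum_univ_two] at hsteer
  simp only [Matrix.cons_val_zero, Matrix.cons_val_one] at hsteer
  have hτ := hnonneg _ _ _ hMρ hMρ
  refine (inv_mul_le_iff₀ (by exact_mod_cast hd)).mp ?_
  linarith [mul_nonneg (sub_nonneg.2 hd1) hτ]
end
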